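/- In the soft product topology on ∏_i X_i with parameter set ∏_i E_i, the soft closure of a soft cartesian product of soft sets equals the soft cartesian product of their soft closures: cl(∏_i (F_i,E_i)) = ∏_i cl(F_i,E_i). -/

import Mathlib

/-- τ is a soft topology on `X` with parameter set `E`. -/
def IsSoftTopology {X E : Type*} (τ : Set (E → Set X)) : Prop :=
  (fun _ => (∅ : Set X)) ∈ τ ∧
  (fun _ => (Set.univ : Set X)) ∈ τ ∧
  (∀ F G : E → Set X, F ∈ τ → G ∈ τ → (fun e => F e ∩ G e) ∈ τ) ∧
  (∀ 𝒜 : Set (E → Set X), 𝒜 ⊆ τ → (fun e => ⋃ F ∈ 𝒜, F e) ∈ τ)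

/-- A soft set is soft closed iff its soft complement is soft open. -/
def IsSoftClosed {X E : Type*} (τ : Set (E → Set X)) (C : E → Set X) : Prop :=
  (fun e => (C e)ᶜ) ∈ τ

/-- The soft closure: soft intersection of all soft closed soft supersets. -/
def softClosure {X E : Type*} (τ : Set (E → Set X)) (F : E → Set X) : E → Set X :=
  fun e => ⋂ C ∈ {C : E → Set X | IsSoftClosed τ C ∧ ∀ e', F e' ⊆ C e'}, C e

def softImage {U U' E E' : Type*} (φ : U → U') (ψ : E → E')
    (F : E → Set U) : E' → Set U' :=
  fun e' => ⋃ e ∈ ψ ⁻¹' {e'}, φ '' F e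

def softProd {I : Type*} {U : I → Type*} {E : I → Type*}
    (F : ∀ i, E i → Set (U i)) : (∀ i, E i) → Set (∀ i, U i) :=
  fun e => Set.pi Set.univ (fun i => F i (e i))

/-- The soft open subbase of the soft product topology: soft inverse images of
soft open sets under the soft projection mappings. -/
def productSubbase {I : Type*} {Xi : I → Type*} {Ei : I → Type*}
    (τi : ∀ i, Set (Ei i → Set (Xi i))) : Set ((∀ i, Ei i) → Set (∀ i, Xi i)) :=
  {S | ∃ i, ∃ G ∈ τi i, S = fun e => {x : ∀ j, Xi j | x i ∈ G (e i)}}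

/-- The soft topology generated by a soft open subbase. -/
def generatedSoftTopology {X E : Type*} (S : Set (E → Set X)) : Set (E → Set X) :=
  ⋂₀ {τ | IsSoftTopology τ ∧ S ⊆ τ}

/-! A soft set `F : E → Set X` is the same thing as its graph `{(e, x) | x ∈ F e} ⊆ E × X`, and
under this correspondence a soft topology on `X` with parameters `E` is an ordinary topology on
`E × X`, with the soft closure becoming the closure. The subbasic soft open sets of the soft
product topology are the graphs of `{(e, x) | (e i, x i) ∈ U}`, so regrouping
`(∏ Eᵢ) × (∏ Xᵢ) ≃ ∏ (Eᵢ × Xᵢ)` is a homeomorphism onto the product topology, and it carries the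
graph of a soft cartesian product to a box `∏ Uᵢ`. The theorem is then `closure_pi_set`. -/

open Set Topology TopologicalSpace

section SoftSet

variable {X E : Type*}

def softSetEquiv : (E → Set X) ≃ Set (E × X) where
  toFun F := {p | p.2 ∈ F p.1}
  invFun U e := {x | (e, x) ∈ U}
  left_inv _ := rfl
  right_inv _ := rfl

@[simp]
lemma mem_softSetEquiv {F : E → Set X} {p : E × X} : p ∈ softSetEquiv F ↔ p.2 ∈ F p.1 :=
  Iff.rfl

lemma softSetEquiv_subset_softSetEquiv {F G : E → Set X} :
    softSetEquiv F ⊆ softSetEquiv G ↔ ∀ e, F e ⊆ G e :=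
  ⟨fun h e x hx => @h (e, x) hx, fun h p hp => h p.1 hp⟩

@[simp]
lemma mem_softSetEquiv_symm {U : Set (E × X)} {e : E} {x : X} :
    x ∈ softSetEquiv.symm U e ↔ (e, x) ∈ U :=
  Iff.rfl

lemma isSoftTopology_preimage_softSetEquiv (t : TopologicalSpace (E × X)) :
    IsSoftTopology {F : E → Set X | IsOpen[t] (softSetEquiv F)} := by
  refine ⟨?_, ?_, fun F G hF hG => hF.inter hG, fun 𝒜 h𝒜 => ?_⟩
  · show IsOpen[t] (softSetEquiv fun _ => ∅)
    convert @isOpen_empty _ t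
    ext
    simp
  · show IsOpen[t] (softSetEquiv fun _ => univ)
    convert @isOpen_univ _ t
    ext
    simp
  · have h : softSetEquiv (fun e => ⋃ F ∈ 𝒜, F e) = ⋃ F ∈ 𝒜, softSetEquiv F := by
      ext
      simp
    show IsOpen[t] _
    rw [h]
    exact isOpen_biUnion fun F hF => h𝒜 hF

variable {τ : Set (E → Set X)}

@[reducible]
def IsSoftTopology.toTopologicalSpace (hτ : IsSoftTopology τ) : TopologicalSpace (E × X) where
  IsOpen U := softSetEquiv.symm U ∈ τ
  isOpen_univ := hτ.2.1
  isOpen_inter _ _ := hτ.2.2.1 _ _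
  isOpen_sUnion S hS := by
    convert hτ.2.2.2 (softSetEquiv.symm '' S) (by rintro _ ⟨U, hU, rfl⟩; exact hS U hU) using 1
    ext e x
    simp only [mem_softSetEquiv_symm, mem_sUnion, mem_iUnion, mem_image, exists_prop,
      exists_exists_and_eq_and]

lemma IsSoftTopology.isClosed_softSetEquiv_iff (hτ : IsSoftTopology τ) {C : E → Set X} :
    IsClosed[hτ.toTopologicalSpace] (softSetEquiv C) ↔ IsSoftClosed τ C :=
  @isOpen_compl_iff _ _ hτ.toTopologicalSpace |>.symm

lemma IsSoftTopology.softSetEquiv_softClosure (hτ : IsSoftTopology τ) (F : E → Set X) :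
    softSetEquiv (softClosure τ F) = closure[hτ.toTopologicalSpace] (softSetEquiv F) := by
  ext ⟨e, x⟩
  simp only [mem_softSetEquiv, softClosure, closure, mem_iInter, mem_sInter, mem_ofPred_eq]
  refine softSetEquiv.forall_congr fun C => ?_
  rw [hτ.isClosed_softSetEquiv_iff, softSetEquiv_subset_softSetEquiv]
  rfl

end SoftSet

section Generated

variable {X E : Type*}

lemma subset_generatedSoftTopology (S : Set (E → Set X)) : S ⊆ generatedSoftTopology S :=
  fun _ hF _ hτ => hτ.2 hF

lemma generatedSoftTopology_subset {S τ : Set (E → Set X)} (hτ : IsSoftTopology τ)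
    (hS : S ⊆ τ) : generatedSoftTopology S ⊆ τ :=
  fun _ hF => hF τ ⟨hτ, hS⟩

lemma isSoftTopology_generatedSoftTopology (S : Set (E → Set X)) :
    IsSoftTopology (generatedSoftTopology S) :=
  ⟨fun _ hτ => hτ.1.1, fun _ hτ => hτ.1.2.1,
    fun F G hF hG τ hτ => hτ.1.2.2.1 F G (hF τ hτ) (hG τ hτ),
    fun 𝒜 h𝒜 τ hτ => hτ.1.2.2.2 𝒜 fun _ hF => h𝒜 hF τ hτ⟩

lemma toTopologicalSpace_generatedSoftTopology (S : Set (E → Set X)) :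
    (isSoftTopology_generatedSoftTopology S).toTopologicalSpace =
      generateFrom (softSetEquiv '' S) := by
  refine le_antisymm (le_generateFrom ?_) fun U hU => ?_
  · rintro _ ⟨F, hF, rfl⟩
    exact subset_generatedSoftTopology S hF
  · have := generatedSoftTopology_subset
      (isSoftTopology_preimage_softSetEquiv (generateFrom (softSetEquiv '' S)))
      (fun F hF => isOpen_generateFrom_of_mem (mem_image_of_mem _ hF)) hU
    simpa using this

end Generated

section Product

variable {I : Type*} {Xi : I → Type*} {Ei : I → Type*}

lemma softSetEquiv_softProd (F : ∀ i, Ei i → Set (Xi i)) :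
    softSetEquiv (softProd F) =
      (Equiv.arrowProdEquivProdArrow I Ei Xi).symm ⁻¹' pi univ fun i => softSetEquiv (F i) := by
  ext
  simp [softProd]

def softProductHomeomorph {τi : ∀ i, Set (Ei i → Set (Xi i))}
    (hτi : ∀ i, IsSoftTopology (τi i)) :
    @Homeomorph ((∀ i, Ei i) × (∀ i, Xi i)) (∀ i, Ei i × Xi i)
      (isSoftTopology_generatedSoftTopology (productSubbase τi)).toTopologicalSpace
      (@Pi.topologicalSpace _ _ fun i => (hτi i).toTopologicalSpace) :=
  letI := fun i => (hτi i).toTopologicalSpace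
  @Homeomorph.mk _ _ (isSoftTopology_generatedSoftTopology (productSubbase τi)).toTopologicalSpace _
    (Equiv.arrowProdEquivProdArrow I Ei Xi).symm
    (by
      rw [toTopologicalSpace_generatedSoftTopology]
      let _ : TopologicalSpace ((∀ i, Ei i) × (∀ i, Xi i)) :=
        generateFrom (softSetEquiv '' productSubbase τi)
      refine continuous_pi fun i => continuous_def.2 fun U hU => isOpen_generateFrom_of_mem ?_
      exact ⟨_, ⟨i, softSetEquiv.symm U, hU, rfl⟩, rfl⟩)
    (by
      rw [toTopologicalSpace_generatedSoftTopology, continuous_generateFrom_iff]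
      rintro _ ⟨_, ⟨i, G, hG, rfl⟩, rfl⟩
      exact (continuous_apply (A := fun i => Ei i × Xi i) i).isOpen_preimage (softSetEquiv G) hG)

lemma coe_softProductHomeomorph {τi : ∀ i, Set (Ei i → Set (Xi i))}
    (hτi : ∀ i, IsSoftTopology (τi i)) :
    ⇑(softProductHomeomorph hτi) = (Equiv.arrowProdEquivProdArrow I Ei Xi).symm :=
  rfl

end Product

/-- in the soft product topology, the soft closure of a soft
cartesian product of soft sets is the soft cartesian product of their soft
closures. -/
theorem softClosure_softProd {I : Type*} {Xi : I → Type*} {Ei : I → Type*}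
    (τi : ∀ i, Set (Ei i → Set (Xi i))) (hτi : ∀ i, IsSoftTopology (τi i))
    (F : ∀ i, Ei i → Set (Xi i)) :
    softClosure (generatedSoftTopology (productSubbase τi)) (softProd F) =
      softProd (fun i => softClosure (τi i) (F i)) := by
  let _ := fun i => (hτi i).toTopologicalSpace
  let _ := (isSoftTopology_generatedSoftTopology (productSubbase τi)).toTopologicalSpace
  apply softSetEquiv.injective
  rw [(isSoftTopology_generatedSoftTopology _).softSetEquiv_softClosure, softSetEquiv_softProd,
    softSetEquiv_softProd]
  rw [← coe_softProductHomeomorph hτi, ← Homeomorph.preimage_closure, closure_pi_set]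
  simp_rw [(hτi _).softSetEquiv_softClosure]
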